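/- arXiv:math/0703738 — 3 statements merged into one kernel-verified Lean document; each statement's English description precedes it below -/
import Mathlib

section
/- Let Γ be a free abelian group, λ : Γ → ℝ an injective group homomorphism, k a commutative ring with 1 ≠ 0, and K = k[Γ]. Let V be a k-module and W = V ⊗_k K. For every nonzero r ∈ W there exists g ∈ Γ such that g·r = q⁰ + q⁻, where q⁰ ∈ V⁰ (the image of V ⊗ 1) is nonzero and q⁻ ∈ V⁻ (the k-span of the elements v ⊗ g' with λ(g') < 0). -/
open TensorProduct

/-- Chekanov's key lemma: For a free abelian group `Γ` with injective
weight `lam : Γ → ℝ`, a nontrivial commutative ring `k`, `K = k[Γ]`, and a `k`-module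
`V` with `W = V ⊗_k K` (here `K ⊗[k] V`, on which `Γ` acts through the group-ring
factor), every nonzero `r ∈ W` admits `g ∈ Γ` such that `g • r = q⁰ + q⁻` with
`q⁰ ∈ V⁰` nonzero and `q⁻ ∈ V⁻`. -/
theorem stmt_2 {Γ : Type*} [AddCommGroup Γ] [Module.Free ℤ Γ]
    {k : Type*} [CommRing k] [Nontrivial k]
    (lam : Γ →+ ℝ) (hlam : Function.Injective lam)
    {V : Type*} [AddCommGroup V] [Module k V]
    (r : (AddMonoidAlgebra k Γ) ⊗[k] V) (hr : r ≠ 0) :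
    ∃ g : Γ, ∃ qzero qminus : (AddMonoidAlgebra k Γ) ⊗[k] V,
      qzero ∈ LinearMap.range (TensorProduct.mk k (AddMonoidAlgebra k Γ) V 1) ∧
      qzero ≠ 0 ∧
      qminus ∈ Submodule.span k {x | ∃ v : V, ∃ g' : Γ, lam g' < 0 ∧
          x = AddMonoidAlgebra.single g' (1 : k) ⊗ₜ[k] v} ∧
      (AddMonoidAlgebra.single g (1 : k)) • r = qzero + qminus := by
  classical
  set e := (LinearEquiv.rTensor V (AddMonoidAlgebra.coeffLinearEquiv k)) ≪≫ₗ
    TensorProduct.finsuppScalarLeft k V Γ with he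
  set f := e r with hf
  have hf0 : f ≠ 0 := by
    simp only [hf, ne_eq, LinearEquiv.map_eq_zero_iff]
    exact hr
  have hsupp : f.support.Nonempty := Finsupp.support_nonempty_iff.mpr hf0
  obtain ⟨g0, hg0mem, hg0max⟩ := f.support.exists_max_image lam hsupp
  have hfg0 : f g0 ≠ 0 := Finsupp.mem_support_iff.mp hg0mem
  -- decompose r
  have hrsum : r = ∑ a ∈ f.support, (AddMonoidAlgebra.single a (1 : k)) ⊗ₜ[k] f a := by
    have : r = e.symm f := by rw [hf, LinearEquiv.symm_apply_apply]
    rw [this]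
    conv_lhs => rw [← Finsupp.sum_single f]
    rw [Finsupp.sum, map_sum]
    refine Finset.sum_congr rfl fun a _ => ?_
    simp only [e, LinearEquiv.trans_symm, LinearEquiv.trans_apply,
      TensorProduct.finsuppScalarLeft_symm_apply_single, LinearEquiv.rTensor_symm_tmul]
    rfl
  refine ⟨-g0, (1 : AddMonoidAlgebra k Γ) ⊗ₜ[k] f g0,
    ∑ a ∈ f.support.erase g0, (AddMonoidAlgebra.single (-g0 + a) (1 : k)) ⊗ₜ[k] f a,
    ⟨f g0, rfl⟩, ?_, ?_, ?_⟩
  · intro h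
    apply hfg0
    have := congrArg e h
    rw [map_zero] at this
    have h1 : (1 : AddMonoidAlgebra k Γ) = AddMonoidAlgebra.single 0 1 := rfl
    rw [h1] at this
    simp only [e, LinearEquiv.trans_apply, LinearEquiv.rTensor_tmul,
      AddMonoidAlgebra.coeffLinearEquiv_apply, AddMonoidAlgebra.coeff_single] at this
    rw [TensorProduct.finsuppScalarLeft_apply_tmul] at this
    rw [Finsupp.sum_single_index (by simp)] at this
    simpa using congrArg (fun p => p 0) this
  · refine Submodule.sum_mem _ fun a ha => ?_
    refine Submodule.subset_span ⟨f a, -g0 + a, ?_, rfl⟩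
    have hane : a ≠ g0 := (Finset.mem_erase.mp ha).1
    have hle : lam a ≤ lam g0 := hg0max a (Finset.mem_erase.mp ha).2
    have hlt : lam a < lam g0 :=
      lt_of_le_of_ne hle fun h => hane (hlam h)
    simp only [map_add, map_neg]
    linarith
  · rw [hrsum, Finset.smul_sum]
    have key : ∀ a : Γ, (AddMonoidAlgebra.single (-g0) (1 : k)) •
        ((AddMonoidAlgebra.single a (1 : k)) ⊗ₜ[k] f a)
        = (AddMonoidAlgebra.single (-g0 + a) (1 : k)) ⊗ₜ[k] f a := by
      intro a
      rw [TensorProduct.smul_tmul']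
      congr 1
      rw [smul_eq_mul, AddMonoidAlgebra.single_mul_single, one_mul]
    simp only [key]
    rw [← Finset.add_sum_erase _ _ hg0mem]
    congr 2
    simp [AddMonoidAlgebra.one_def]
end

section
/- Let Γ be a free abelian group, λ : Γ → ℝ an injective group homomorphism, k a commutative ring with 1 ≠ 0, K = k[Γ], and (M, ∂) a differential k-module, with ∂ extended K-linearly to M ⊗_k K. Let N be a K-module and let Φ⁺ : M ⊗ K → N and Φ⁻ : N → M ⊗ K be K-linear maps. If the composition Φ⁻ ∘ Φ⁺ is λ-homotopic to the identity map of M ⊗ K, then the rank of N as a K-module is at least the rank of the homology H(M, ∂) as a k-module. -/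
open TensorProduct

universe uM uN

section Aux

variable (k Γ : Type*) [CommRing k] [AddCommGroup Γ]
variable (M : Type uM) [AddCommGroup M] [Module k M]

/-- The zero-weight component of `K ⊗[k] M`, where `K = k[Γ]`. -/
noncomputable def zmap : (AddMonoidAlgebra k Γ) ⊗[k] M →ₗ[k] M :=
  TensorProduct.lift (LinearMap.mk₂ k (fun c v => c.coeff 0 • v)
    (fun c c' v => by
      show (c + c').coeff 0 • v = c.coeff 0 • v + c'.coeff 0 • v
      rw [AddMonoidAlgebra.coeff_add, Finsupp.add_apply, add_smul])
    (fun a c v => by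
      show (a • c).coeff 0 • v = a • (c.coeff 0 • v)
      rw [AddMonoidAlgebra.coeff_smul, Finsupp.smul_apply, smul_assoc])
    (fun c v v' => smul_add _ _ _)
    (fun a c v => smul_comm _ _ _))

variable {k Γ M}

theorem zmap_tmul (c : AddMonoidAlgebra k Γ) (v : M) :
    zmap k Γ M (c ⊗ₜ[k] v) = c.coeff 0 • v := rfl

end Aux

set_option maxHeartbeats 2000000 in
/-- Chekanov's Lemma 5: With `Γ` a free abelian group, injective weight
`lam : Γ → ℝ`, `k` a nontrivial commutative ring, `K = k[Γ]`, and `(M, D)` a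
differential `k`-module with differential extended `K`-linearly to `M ⊗_k K`
(here `K ⊗[k] M`): if `N` is a `K`-module and `Φ⁺ : M ⊗ K → N`, `Φ⁻ : N → M ⊗ K` are
`K`-linear maps such that `Φ⁻ ∘ Φ⁺` is `λ`-homotopic to the identity, then the rank of
`N` over `K` is at least the rank of the homology `H(M, D) = ker D / im D` over `k`. -/
theorem stmt_5 {Γ : Type*} [AddCommGroup Γ] [Module.Free ℤ Γ]
    {k : Type*} [CommRing k] [Nontrivial k]
    (lam : Γ →+ ℝ) (hlam : Function.Injective lam)
    {M : Type uM} [AddCommGroup M] [Module k M]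
    (D : M →ₗ[k] M) (hD : D ∘ₗ D = 0)
    -- the pieces of the weight decomposition of `M ⊗ K`
    (Mplus Mzero Mminus : Submodule k ((AddMonoidAlgebra k Γ) ⊗[k] M))
    (hMplus : Mplus = Submodule.span k {x | ∃ v : M, ∃ g : Γ, 0 < lam g ∧
        x = AddMonoidAlgebra.single g (1 : k) ⊗ₜ[k] v})
    (hMzero : Mzero = LinearMap.range (TensorProduct.mk k (AddMonoidAlgebra k Γ) M 1))
    (hMminus : Mminus = Submodule.span k {x | ∃ v : M, ∃ g : Γ, lam g < 0 ∧
        x = AddMonoidAlgebra.single g (1 : k) ⊗ₜ[k] v})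
    -- the projection `p⁺` onto `M⁰ ⊕ M⁺` annihilating `M⁻`
    (pplus : (AddMonoidAlgebra k Γ) ⊗[k] M →ₗ[k] (AddMonoidAlgebra k Γ) ⊗[k] M)
    (hpplus₁ : ∀ x ∈ Mzero ⊔ Mplus, pplus x = x)
    (hpplus₂ : ∀ x ∈ Mminus, pplus x = 0)
    -- the projection `p⁻` onto `M⁰ ⊕ M⁻` annihilating `M⁺`
    (pminus : (AddMonoidAlgebra k Γ) ⊗[k] M →ₗ[k] (AddMonoidAlgebra k Γ) ⊗[k] M)
    (hpminus₁ : ∀ x ∈ Mzero ⊔ Mminus, pminus x = x)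
    (hpminus₂ : ∀ x ∈ Mplus, pminus x = 0)
    -- a `K`-module `N` with `K`-linear maps `Φ⁺` and `Φ⁻`
    (N : Type uN) [AddCommGroup N] [Module (AddMonoidAlgebra k Γ) N]
    (Φp : (AddMonoidAlgebra k Γ) ⊗[k] M →ₗ[AddMonoidAlgebra k Γ] N)
    (Φm : N →ₗ[AddMonoidAlgebra k Γ] (AddMonoidAlgebra k Γ) ⊗[k] M)
    -- `Φ⁻ ∘ Φ⁺` is `λ`-homotopic to the identity
    (h : (AddMonoidAlgebra k Γ) ⊗[k] M →ₗ[AddMonoidAlgebra k Γ]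
        (AddMonoidAlgebra k Γ) ⊗[k] M)
    (hh : ∀ x, pplus (Φm (Φp (pminus x)) - pminus x
        + h (LinearMap.lTensor (AddMonoidAlgebra k Γ) D (pminus x))
        + LinearMap.lTensor (AddMonoidAlgebra k Γ) D (h (pminus x))) = 0) :
    Cardinal.lift.{uN} (Module.rank k
        (LinearMap.ker D ⧸ (LinearMap.range D).comap (LinearMap.ker D).subtype))
      ≤ Cardinal.lift.{uM} (Module.rank (AddMonoidAlgebra k Γ) N) := by
  classical
  -- single-tensor rescaling
  have hsingle_smul : ∀ (b : k) (g : Γ) (v : M),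
      (AddMonoidAlgebra.single g b : AddMonoidAlgebra k Γ) ⊗ₜ[k] v
        = b • ((AddMonoidAlgebra.single g (1 : k) : AddMonoidAlgebra k Γ) ⊗ₜ[k] v) := by
    intro b g v
    rw [TensorProduct.smul_tmul', AddMonoidAlgebra.smul_single', mul_one]
  -- membership of weight-0 singles in Mzero
  have hmemz : ∀ (b : k) (v : M),
      (AddMonoidAlgebra.single (0 : Γ) b : AddMonoidAlgebra k Γ) ⊗ₜ[k] v ∈ Mzero := by
    intro b v
    rw [hMzero]
    refine ⟨b • v, ?_⟩
    show (1 : AddMonoidAlgebra k Γ) ⊗ₜ[k] (b • v) = _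
    rw [tmul_smul, TensorProduct.smul_tmul', AddMonoidAlgebra.one_def,
      AddMonoidAlgebra.smul_single', mul_one]
  -- membership of negative-weight singles in Mminus
  have hmemm : ∀ (b : k) (g : Γ) (v : M), lam g < 0 →
      (AddMonoidAlgebra.single g b : AddMonoidAlgebra k Γ) ⊗ₜ[k] v ∈ Mminus := by
    intro b g v hg
    rw [hsingle_smul, hMminus]
    exact Submodule.smul_mem _ _ (Submodule.subset_span ⟨v, g, hg, rfl⟩)
  -- membership of positive-weight singles in Mplus
  have hmemp : ∀ (b : k) (g : Γ) (v : M), 0 < lam g →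
      (AddMonoidAlgebra.single g b : AddMonoidAlgebra k Γ) ⊗ₜ[k] v ∈ Mplus := by
    intro b g v hg
    rw [hsingle_smul, hMplus]
    exact Submodule.smul_mem _ _ (Submodule.subset_span ⟨v, g, hg, rfl⟩)
  -- decomposition of a pure tensor into singles
  have htmul_decomp : ∀ (c : AddMonoidAlgebra k Γ) (v : M),
      c ⊗ₜ[k] v = ∑ g ∈ c.coeff.support, (AddMonoidAlgebra.single g (c.coeff g)) ⊗ₜ[k] v := by
    intro c v
    conv_lhs => rw [← AddMonoidAlgebra.sum_coeff_single c]
    rw [Finsupp.sum, TensorProduct.sum_tmul]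
  -- tensors with nonpositive weights lie in Mzero ⊔ Mminus
  have hmem_le : ∀ (c : AddMonoidAlgebra k Γ) (v : M), (∀ g ∈ c.coeff.support, lam g ≤ 0) →
      c ⊗ₜ[k] v ∈ Mzero ⊔ Mminus := by
    intro c v hc
    rw [htmul_decomp]
    refine Submodule.sum_mem _ fun g hg => ?_
    rcases lt_or_eq_of_le (hc g hg) with h1 | h1
    · exact Submodule.mem_sup_right (hmemm _ _ _ h1)
    · have hg0 : g = 0 := hlam (by rw [map_zero]; exact h1)
      subst hg0
      exact Submodule.mem_sup_left (hmemz _ _)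
  -- the three pieces fill up everything
  have hmem_top : ∀ y : (AddMonoidAlgebra k Γ) ⊗[k] M, y ∈ Mzero ⊔ Mplus ⊔ Mminus := by
    intro y
    have htop : (⊤ : Submodule k ((AddMonoidAlgebra k Γ) ⊗[k] M)) ≤ Mzero ⊔ Mplus ⊔ Mminus := by
      rw [← TensorProduct.span_tmul_eq_top k, Submodule.span_le]
      rintro x ⟨c, v, rfl⟩
      rw [SetLike.mem_coe, htmul_decomp]
      refine Submodule.sum_mem _ fun g hg => ?_
      rcases lt_trichotomy (lam g) 0 with h1 | h1 | h1
      · exact Submodule.mem_sup_right (hmemm _ _ _ h1)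
      · have hg0 : g = 0 := hlam (by rw [map_zero]; exact h1)
        subst hg0
        exact Submodule.mem_sup_left (Submodule.mem_sup_left (hmemz _ _))
      · exact Submodule.mem_sup_left (Submodule.mem_sup_right (hmemp _ _ _ h1))
    exact htop trivial
  -- the zero-component map kills Mminus
  have hz_minus : ∀ x ∈ Mminus, zmap k Γ M x = 0 := by
    intro x hx
    rw [hMminus] at hx
    induction hx using Submodule.span_induction with
    | mem x hx =>
      obtain ⟨v, g, hg, rfl⟩ := hx
      rw [zmap_tmul]
      have hg0 : g ≠ 0 := by
        intro hg0
        rw [hg0, map_zero] at hg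
        exact lt_irrefl _ hg
      rw [AddMonoidAlgebra.coeff_single, Finsupp.single_eq_of_ne' hg0, zero_smul]
    | zero => rw [map_zero]
    | add a b _ _ ha hb => rw [map_add, ha, hb, add_zero]
    | smul a x _ hx => rw [map_smul, hx, smul_zero]
  -- the zero-component map kills Mplus
  have hz_plus : ∀ x ∈ Mplus, zmap k Γ M x = 0 := by
    intro x hx
    rw [hMplus] at hx
    induction hx using Submodule.span_induction with
    | mem x hx =>
      obtain ⟨v, g, hg, rfl⟩ := hx
      rw [zmap_tmul]
      have hg0 : g ≠ 0 := by
        intro hg0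
        rw [hg0, map_zero] at hg
        exact lt_irrefl _ hg
      rw [AddMonoidAlgebra.coeff_single, Finsupp.single_eq_of_ne' hg0, zero_smul]
    | zero => rw [map_zero]
    | add a b _ _ ha hb => rw [map_add, ha, hb, add_zero]
    | smul a x _ hx => rw [map_smul, hx, smul_zero]
  -- `z ∘ p⁺ = z`
  have hzp : ∀ y, zmap k Γ M (pplus y) = zmap k Γ M y := by
    intro y
    obtain ⟨y', hy', y2, hy2, rfl⟩ := Submodule.mem_sup.1 (hmem_top y)
    obtain ⟨y0, hy0, y1, hy1, rfl⟩ := Submodule.mem_sup.1 hy'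
    have h01 : y0 + y1 ∈ Mzero ⊔ Mplus :=
      add_mem (Submodule.mem_sup_left hy0) (Submodule.mem_sup_right hy1)
    have e1 : pplus (y0 + y1 + y2) = y0 + y1 := by
      rw [map_add, hpplus₁ _ h01, hpplus₂ _ hy2, add_zero]
    rw [e1]
    simp only [map_add, hz_plus _ hy1, hz_minus _ hy2, add_zero]
  -- `z` intertwines the differentials
  have hzD : ∀ y, zmap k Γ M (LinearMap.lTensor (AddMonoidAlgebra k Γ) D y)
      = D (zmap k Γ M y) := by
    intro y
    induction y using TensorProduct.induction_on with
    | zero => rw [map_zero, map_zero, map_zero]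
    | tmul c v => rw [LinearMap.lTensor_tmul, zmap_tmul, zmap_tmul, map_smul]
    | add a b ha hb => rw [map_add, map_add, map_add, ha, hb, map_add]
  -- pure tensors as scalar multiples
  have hsmul1 : ∀ (a : AddMonoidAlgebra k Γ) (v : M),
      a ⊗ₜ[k] v = a • ((1 : AddMonoidAlgebra k Γ) ⊗ₜ[k] v) := by
    intro a v
    rw [TensorProduct.smul_tmul', smul_eq_mul, mul_one]
  -- now the rank argument
  rw [Module.rank_def k (LinearMap.ker D ⧸ (LinearMap.range D).comap (LinearMap.ker D).subtype),
    Cardinal.lift_iSup (Cardinal.bddAbove_range _)]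
  haveI : Nonempty {s : Set (LinearMap.ker D ⧸ (LinearMap.range D).comap
      (LinearMap.ker D).subtype) // LinearIndependent k ((↑) : s →
      LinearMap.ker D ⧸ (LinearMap.range D).comap (LinearMap.ker D).subtype)} :=
    ⟨⟨∅, linearIndependent_empty _ _⟩⟩
  refine ciSup_le fun ⟨s, hs⟩ => ?_
  -- choose representatives in `ker D`
  have hrep : ∀ hcl : LinearMap.ker D ⧸ (LinearMap.range D).comap (LinearMap.ker D).subtype,
      ∃ y : LinearMap.ker D, Submodule.Quotient.mk y = hcl :=
    fun hcl => Submodule.Quotient.mk_surjective _ hcl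
  choose w hw using hrep
  -- the key claim: the images are linearly independent over K
  have hind : LinearIndependent (AddMonoidAlgebra k Γ)
      (fun i : s => Φp ((1 : AddMonoidAlgebra k Γ) ⊗ₜ[k] ((w ↑i : LinearMap.ker D) : M))) := by
    rw [linearIndependent_iff]
    intro c hc
    by_contra hc0
    have hcsupp : c.support.Nonempty := Finsupp.support_nonempty_iff.2 hc0
    have hTne : (c.support.biUnion (fun i => (c i).coeff.support)).Nonempty := by
      obtain ⟨i₀, hi₀⟩ := hcsupp
      obtain ⟨g, hg⟩ := Finsupp.support_nonempty_iff.2 (AddMonoidAlgebra.coeff_eq_zero.not.2 (Finsupp.mem_support_iff.1 hi₀))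
      exact ⟨g, Finset.mem_biUnion.2 ⟨i₀, hi₀, hg⟩⟩
    obtain ⟨g₀, hg₀T, hg₀max⟩ :=
      (c.support.biUnion (fun i => (c i).coeff.support)).exists_max_image lam hTne
    obtain ⟨i₁, hi₁, hgi₁⟩ := Finset.mem_biUnion.1 hg₀T
    set u : AddMonoidAlgebra k Γ := AddMonoidAlgebra.single (-g₀) (1 : k) with hu
    set x : (AddMonoidAlgebra k Γ) ⊗[k] M :=
      ∑ i ∈ c.support, (u * c i) ⊗ₜ[k] ((w ↑i : LinearMap.ker D) : M) with hx
    -- coefficients of `x` have nonpositive weights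
    have hsupp' : ∀ i ∈ c.support, ∀ g ∈ (u * c i).coeff.support, lam g ≤ 0 := by
      intro i hi g hg
      rw [Finsupp.mem_support_iff, hu, AddMonoidAlgebra.coeff_single_mul_apply, one_mul,
        neg_neg] at hg
      have hmem : (g₀ + g) ∈ c.support.biUnion (fun i => (c i).coeff.support) :=
        Finset.mem_biUnion.2 ⟨i, hi, Finsupp.mem_support_iff.2 hg⟩
      have hle := hg₀max _ hmem
      rw [map_add] at hle
      linarith
    have hxmem : x ∈ Mzero ⊔ Mminus :=
      Submodule.sum_mem _ fun i hi => hmem_le _ _ (hsupp' i hi)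
    have hpmx : pminus x = x := hpminus₁ _ hxmem
    -- `D x = 0`
    have hDx : LinearMap.lTensor (AddMonoidAlgebra k Γ) D x = 0 := by
      rw [hx, map_sum]
      refine Finset.sum_eq_zero fun i hi => ?_
      rw [LinearMap.lTensor_tmul, LinearMap.mem_ker.1 (w ↑i).2, tmul_zero]
    -- `Φ⁺ x = 0`
    have hΦx : Φp x = 0 := by
      rw [hx, map_sum]
      have hcongr : ∀ i ∈ c.support, Φp ((u * c i) ⊗ₜ[k] ((w ↑i : LinearMap.ker D) : M))
          = u • (c i • Φp ((1 : AddMonoidAlgebra k Γ) ⊗ₜ[k] ((w ↑i : LinearMap.ker D) : M))) := by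
        intro i hi
        rw [hsmul1, map_smul, mul_smul]
      rw [Finset.sum_congr rfl hcongr, ← Finset.smul_sum]
      have h0 : ∑ i ∈ c.support,
          c i • Φp ((1 : AddMonoidAlgebra k Γ) ⊗ₜ[k] ((w ↑i : LinearMap.ker D) : M)) = 0 := by
        have hc' := hc
        rw [Finsupp.linearCombination_apply, Finsupp.sum] at hc'
        exact hc'
      rw [h0, smul_zero]
    -- the homotopy identity at `x`
    have hzx : zmap k Γ M x = D (zmap k Γ M (h x)) := by
      have h1 : zmap k Γ M (Φm (Φp x) - x
          + h (LinearMap.lTensor (AddMonoidAlgebra k Γ) D x)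
          + LinearMap.lTensor (AddMonoidAlgebra k Γ) D (h x)) = 0 := by
        rw [← hzp]
        have hhx := hh x
        rw [hpmx] at hhx
        rw [hhx, map_zero]
      rw [hΦx, hDx, map_zero, zero_sub, map_zero, add_zero, map_add, map_neg, hzD] at h1
      exact neg_add_eq_zero.1 h1
    -- compute `z x`
    have hzx_val : zmap k Γ M x
        = ∑ i ∈ c.support, ((c i).coeff g₀) • ((w ↑i : LinearMap.ker D) : M) := by
      rw [hx, map_sum]
      refine Finset.sum_congr rfl fun i hi => ?_
      rw [zmap_tmul]
      congr 1
      rw [hu, AddMonoidAlgebra.coeff_single_mul_apply, one_mul, neg_neg, add_zero]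
    -- conclude in the quotient
    have hsum0 : ∑ i ∈ c.support, ((c i).coeff g₀) • ((↑i :
        LinearMap.ker D ⧸ (LinearMap.range D).comap (LinearMap.ker D).subtype)) = 0 := by
      have hmk : ((LinearMap.range D).comap (LinearMap.ker D).subtype).mkQ
            (∑ i ∈ c.support, ((c i).coeff g₀) • (w ↑i))
          = ∑ i ∈ c.support, ((c i).coeff g₀) • ((↑i :
            LinearMap.ker D ⧸ (LinearMap.range D).comap (LinearMap.ker D).subtype)) := by
        rw [map_sum]
        refine Finset.sum_congr rfl fun i hi => ?_
        rw [map_smul, Submodule.mkQ_apply, hw]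
      rw [← hmk, Submodule.mkQ_apply, Submodule.Quotient.mk_eq_zero, Submodule.mem_comap,
        Submodule.coe_subtype]
      have hmval : (((∑ i ∈ c.support, ((c i).coeff g₀) • (w ↑i)) : LinearMap.ker D) : M)
          = zmap k Γ M x := by
        rw [hzx_val]
        simp
      rw [hmval, hzx]
      exact ⟨_, rfl⟩
    have := linearIndependent_iff'.1 hs c.support (fun i => (c i).coeff g₀) hsum0 i₁ hi₁
    exact Finsupp.mem_support_iff.1 hgi₁ this
  exact hind.cardinal_lift_le_rank
end

section
/- Let Γ be a free abelian group, λ : Γ → ℝ an injective group homomorphism, k a commutative ring with 1 ≠ 0, K = k[Γ], and (M, ∂) a differential k-module with nontrivial homology H(M, ∂) ≠ 0, with ∂ extended K-linearly to M ⊗_k K. Suppose there is a k-submodule V ⊆ ker ∂ ⊆ M on which the quotient map onto H(M, ∂) restricts to an isomorphism (for instance, this holds when k is a field). Let ψ₁, ψ₂ : M ⊗ K → M ⊗ K be K-linear maps that are λ-homotopic. Assume that ψ₁ maps ∂-cycles of M ⊗ K to ∂-cycles, that the induced map of ψ₁ on the homology of (M ⊗ K, ∂) is an isomorphism, and that ψ₁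 commutes with p⁺ up to a boundary on cycles, i.e. for every ∂-cycle z ∈ M ⊗ K the element p⁺(ψ₁(z)) − ψ₁(p⁺(z)) lies in the image of ∂. Then ψ₂ ≠ 0. -/
open TensorProduct

/-- Proposition A of the paper: With `Γ` a free abelian group, injective
weight `lam : Γ → ℝ`, `k` a nontrivial commutative ring, `K = k[Γ]`, and `(M, D)` a
differential `k`-module with nontrivial homology whose differential is extended
`K`-linearly to `M ⊗_k K` (here `K ⊗[k] M`): suppose a `k`-submodule `V ⊆ ker D`
represents the homology (the quotient map restricts to an isomorphism `V ≅ H(M, D)`).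
If `ψ₁, ψ₂ : M ⊗ K → M ⊗ K` are `λ`-homotopic `K`-linear maps such that `ψ₁` maps
cycles to cycles, induces an isomorphism on the homology of `(M ⊗ K, ∂)`, and commutes
with `p⁺` up to a boundary on cycles, then `ψ₂ ≠ 0`. -/
theorem stmt_6 {Γ : Type*} [AddCommGroup Γ] [Module.Free ℤ Γ]
    {k : Type*} [CommRing k] [Nontrivial k]
    (lam : Γ →+ ℝ) (hlam : Function.Injective lam)
    {M : Type*} [AddCommGroup M] [Module k M]
    (D : M →ₗ[k] M) (hD : D ∘ₗ D = 0)
    -- the homology `H(M, D)` is nontrivial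
    (hHM : ∃ v, v ∈ LinearMap.ker D ∧ v ∉ LinearMap.range D)
    -- a `k`-submodule `V ⊆ ker D` of cycles representing the homology:
    -- the quotient map `ker D → H(M, D)` restricts to an isomorphism on `V`
    (V : Submodule k M)
    (hV₁ : V ≤ LinearMap.ker D)
    (hV₂ : ∀ v ∈ V, v ∈ LinearMap.range D → v = 0)
    (hV₃ : ∀ z ∈ LinearMap.ker D, ∃ v ∈ V, z - v ∈ LinearMap.range D)
    -- the pieces of the weight decomposition of `M ⊗ K`
    (Mplus Mzero Mminus : Submodule k ((AddMonoidAlgebra k Γ) ⊗[k] M))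
    (hMplus : Mplus = Submodule.span k {x | ∃ v : M, ∃ g : Γ, 0 < lam g ∧
        x = AddMonoidAlgebra.single g (1 : k) ⊗ₜ[k] v})
    (hMzero : Mzero = LinearMap.range (TensorProduct.mk k (AddMonoidAlgebra k Γ) M 1))
    (hMminus : Mminus = Submodule.span k {x | ∃ v : M, ∃ g : Γ, lam g < 0 ∧
        x = AddMonoidAlgebra.single g (1 : k) ⊗ₜ[k] v})
    -- the projection `p⁺` onto `M⁰ ⊕ M⁺` annihilating `M⁻`
    (pplus : (AddMonoidAlgebra k Γ) ⊗[k] M →ₗ[k] (AddMonoidAlgebra k Γ) ⊗[k] M)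
    (hpplus₁ : ∀ x ∈ Mzero ⊔ Mplus, pplus x = x)
    (hpplus₂ : ∀ x ∈ Mminus, pplus x = 0)
    -- the projection `p⁻` onto `M⁰ ⊕ M⁻` annihilating `M⁺`
    (pminus : (AddMonoidAlgebra k Γ) ⊗[k] M →ₗ[k] (AddMonoidAlgebra k Γ) ⊗[k] M)
    (hpminus₁ : ∀ x ∈ Mzero ⊔ Mminus, pminus x = x)
    (hpminus₂ : ∀ x ∈ Mplus, pminus x = 0)
    -- `K`-linear maps `ψ₁`, `ψ₂`
    (ψ₁ ψ₂ : (AddMonoidAlgebra k Γ) ⊗[k] M →ₗ[AddMonoidAlgebra k Γ]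
        (AddMonoidAlgebra k Γ) ⊗[k] M)
    -- `ψ₁` and `ψ₂` are `λ`-homotopic
    (hhtpy : ∃ h : (AddMonoidAlgebra k Γ) ⊗[k] M →ₗ[AddMonoidAlgebra k Γ]
        (AddMonoidAlgebra k Γ) ⊗[k] M,
      ∀ x, pplus (ψ₁ (pminus x) - ψ₂ (pminus x)
          + h (LinearMap.lTensor (AddMonoidAlgebra k Γ) D (pminus x))
          + LinearMap.lTensor (AddMonoidAlgebra k Γ) D (h (pminus x))) = 0)
    -- `ψ₁` maps `∂`-cycles to `∂`-cycles
    (hcyc : ∀ x, LinearMap.lTensor (AddMonoidAlgebra k Γ) D x = 0 →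
        LinearMap.lTensor (AddMonoidAlgebra k Γ) D (ψ₁ x) = 0)
    -- the map induced by `ψ₁` on the homology of `(M ⊗ K, ∂)` is injective ...
    (hinj : ∀ z, LinearMap.lTensor (AddMonoidAlgebra k Γ) D z = 0 →
        ψ₁ z ∈ LinearMap.range (LinearMap.lTensor (AddMonoidAlgebra k Γ) D) →
        z ∈ LinearMap.range (LinearMap.lTensor (AddMonoidAlgebra k Γ) D))
    -- ... and surjective
    (hsurj : ∀ w, LinearMap.lTensor (AddMonoidAlgebra k Γ) D w = 0 →
        ∃ z, LinearMap.lTensor (AddMonoidAlgebra k Γ) D z = 0 ∧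
          w - ψ₁ z ∈ LinearMap.range (LinearMap.lTensor (AddMonoidAlgebra k Γ) D))
    -- `ψ₁` commutes with `p⁺` up to a boundary on cycles
    (hcomm : ∀ z, LinearMap.lTensor (AddMonoidAlgebra k Γ) D z = 0 →
        pplus (ψ₁ z) - ψ₁ (pplus z)
          ∈ LinearMap.range (LinearMap.lTensor (AddMonoidAlgebra k Γ) D)) :
    ψ₂ ≠ 0 := by
  classical
  intro hψ₂
  obtain ⟨v, hv_ker, hv_nb⟩ := hHM
  set K := AddMonoidAlgebra k Γ with hK
  set Del := LinearMap.lTensor K D with hDel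
  -- the differential preserves the weight pieces, hence commutes with `pplus`
  have key : ∀ x : K ⊗[k] M, pplus (Del x) = Del (pplus x) := by
    intro x
    induction x using TensorProduct.induction_on with
    | zero => simp
    | add a b ha hb => simp [map_add, ha, hb]
    | tmul f m =>
      induction f using AddMonoidAlgebra.induction with
      | zero =>
        rw [TensorProduct.zero_tmul]
        simp
      | single_add g c f hgf hc ih =>
        have hsplit : ((AddMonoidAlgebra.single g c + f : K)) ⊗ₜ[k] m
            = ((AddMonoidAlgebra.single g c : K)) ⊗ₜ[k] m + (f : K) ⊗ₜ[k] m :=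
          TensorProduct.add_tmul _ _ _
        have hFS : ∀ (a : Γ) (b : k),
            (AddMonoidAlgebra.single a b : K) = AddMonoidAlgebra.single a b :=
          fun _ _ => rfl
        have hsingle : ∀ m' : M, (AddMonoidAlgebra.single g c : K) ⊗ₜ[k] m'
            = (AddMonoidAlgebra.single g (1 : k) : K) ⊗ₜ[k] (c • m') := by
          intro m'
          rw [show (AddMonoidAlgebra.single g c : K) = c • AddMonoidAlgebra.single g 1 by
            rw [AddMonoidAlgebra.smul_single', mul_one], TensorProduct.smul_tmul]
        have hDelsingle : ∀ m' : M,
            Del ((AddMonoidAlgebra.single g (1:k) : K) ⊗ₜ[k] m')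
              = (AddMonoidAlgebra.single g (1:k) : K) ⊗ₜ[k] (D m') := by
          intro m'; simp [hDel, LinearMap.lTensor_tmul]
        rw [hsplit]
        simp only [map_add]
        rw [ih, hsingle]
        congr 1
        rcases lt_trichotomy (lam g) 0 with hlt | heq | hgt
        · -- negative weight: both sides vanish
          have hmem : ∀ m' : M, (AddMonoidAlgebra.single g (1:k) : K) ⊗ₜ[k] m' ∈ Mminus := by
            intro m'
            rw [hMminus]
            exact Submodule.subset_span ⟨m', g, hlt, rfl⟩
          rw [hDelsingle, hpplus₂ _ (hmem _), hpplus₂ _ (hmem _)]; simp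
        · -- zero weight: `g = 0`, element lies in `Mzero`, `pplus` is the identity
          have hg0 : g = 0 := by
            apply hlam; rw [heq, map_zero]
          subst hg0
          have hmem : ∀ m' : M, (AddMonoidAlgebra.single (0:Γ) (1:k) : K) ⊗ₜ[k] m' ∈
              Mzero ⊔ Mplus := by
            intro m'
            apply Submodule.mem_sup_left
            rw [hMzero]
            refine ⟨m', ?_⟩
            simp [TensorProduct.mk_apply, AddMonoidAlgebra.one_def]
          rw [hDelsingle, hpplus₁ _ (hmem _), hpplus₁ _ (hmem _), hDelsingle]
        · -- positive weight: element lies in `Mplus`, `pplus` is the identity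
          have hmem : ∀ m' : M, (AddMonoidAlgebra.single g (1:k) : K) ⊗ₜ[k] m' ∈
              Mzero ⊔ Mplus := by
            intro m'
            apply Submodule.mem_sup_right
            rw [hMplus]
            exact Submodule.subset_span ⟨m', g, hgt, rfl⟩
          rw [hDelsingle, hpplus₁ _ (hmem _), hpplus₁ _ (hmem _), hDelsingle]
  -- the distinguished cycle `z = 1 ⊗ v`
  set z : K ⊗[k] M := (1 : K) ⊗ₜ[k] v with hz
  have hz0 : z ∈ Mzero := by
    rw [hMzero]; exact ⟨v, rfl⟩
  have hzcyc : Del z = 0 := by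
    have : D v = 0 := hv_ker
    simp [hDel, hz, LinearMap.lTensor_tmul, this]
  have hpminus_z : pminus z = z := hpminus₁ z (Submodule.mem_sup_left hz0)
  have hpplus_z : pplus z = z := hpplus₁ z (Submodule.mem_sup_left hz0)
  -- the homotopy relation at `z`, with `ψ₂ = 0`
  obtain ⟨h, hh⟩ := hhtpy
  have hrel := hh z
  rw [hpminus_z, hψ₂] at hrel
  rw [hzcyc] at hrel
  simp only [LinearMap.zero_apply, map_zero, sub_zero, add_zero] at hrel
  -- hrel : pplus (ψ₁ z + Del (h z)) = 0
  have hrel' : pplus (ψ₁ z) + Del (pplus (h z)) = 0 := by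
    rw [← key]
    rw [← map_add]
    exact hrel
  -- `ψ₁ z` is a boundary
  obtain ⟨b, hb⟩ := hcomm z hzcyc
  rw [hpplus_z] at hb
  have hψ₁z : ψ₁ z = Del (-(pplus (h z) + b)) := by
    have h1 : pplus (ψ₁ z) = ψ₁ z + Del b := by
      rw [hb]; abel
    rw [h1] at hrel'
    rw [map_neg, map_add, eq_neg_iff_add_eq_zero]
    calc ψ₁ z + (Del (pplus (h z)) + Del b)
        = ψ₁ z + Del b + Del (pplus (h z)) := by abel
      _ = 0 := hrel'
  have hz_bd : z ∈ LinearMap.range Del := hinj z hzcyc ⟨_, hψ₁z.symm⟩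
  obtain ⟨w, hw⟩ := hz_bd
  -- evaluate the `K`-coordinate at `0 : Γ` to get a boundary in `M`
  let φ : K ⊗[k] M →ₗ[k] M :=
    (TensorProduct.lid k M).toLinearMap ∘ₗ
      LinearMap.rTensor M ((Finsupp.lapply (0 : Γ) : (Γ →₀ k) →ₗ[k] k) ∘ₗ
        (AddMonoidAlgebra.coeffLinearEquiv k).toLinearMap)
  have hφD : ∀ x : K ⊗[k] M, φ (Del x) = D (φ x) := by
    intro x
    induction x using TensorProduct.induction_on with
    | zero => simp
    | add a b ha hb => simp [map_add, ha, hb]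
    | tmul f m =>
      simp [φ, hDel, LinearMap.lTensor_tmul, LinearMap.rTensor_tmul,
        TensorProduct.lid_tmul, map_smul]
  have hφz : φ z = v := by
    have h1 : (1 : K).coeff 0 = 1 := by
      rw [AddMonoidAlgebra.one_def]
      exact Finsupp.single_eq_same
    show (TensorProduct.lid k M) (LinearMap.rTensor M ((Finsupp.lapply (0 : Γ)) ∘ₗ
      (AddMonoidAlgebra.coeffLinearEquiv k).toLinearMap) ((1 : K) ⊗ₜ[k] v)) = v
    rw [LinearMap.rTensor_tmul, TensorProduct.lid_tmul]
    change (1 : K).coeff 0 • v = v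
    rw [h1, one_smul]
  exact hv_nb ⟨φ w, by rw [← hφD, hw, hφz]⟩
end
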